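/- Let I_1,…,I_n, J ⊆ C be pairwise disjoint finite subsets, I = I_1 ∪ … ∪ I_n, and let vI_s ∈ Seq(I_s) for s ∈ {1,…,n} and vJ ∈ Seq(J). Then for every s ∈ {1,…,n}, the element [f_{vJ}]^{(s)}·(f_{vI_1} ⊗ ⋯ ⊗ f_{vI_n}) lies in U(𝔫)^{⊗n}_{I∪J} and B_{I∪J}(z)( [f_{vJ}]^{(s)}·(f_{vI_1} ⊗ ⋯ ⊗ f_{vI_n}) ) = B_{vI_1,…,vI_n}(t;z) · A_{vJ}(t_J) · ( ∑_{i ∈ I_s, j ∈ J} a(j,i)/(t_j − t_i) + ∑_{j ∈ J} a(j,s)/(t_j − z_s) ) in ℂ(t). -/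

import Mathlib

/- STATEMENT 5.
`U(𝔫)^{⊗n}` is realized as the `n`-fold tensor power `⨂[ℂ] (s : Fin n), FreeAlgebra ℂ C`.
Given pairwise disjoint nodup lists `vI 1, …, vI n` (the sequences `vI_s ∈ Seq(I_s)`) and a
nodup list `vJ ∈ Seq(J)` disjoint from them, the element
`[f_{vJ}]^{(s)}·(f_{vI_1} ⊗ ⋯ ⊗ f_{vI_n})` lies in `U(𝔫)^{⊗n}_{I∪J}` (the span of the tensor
monomials indexed by `Seq^{(n)}(I∪J)`), and the linear map `B_{I∪J}(z)` (determined by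
`f_{w_1}⊗⋯⊗f_{w_n} ↦ ∏_s B_{w_s}(t;z_s)`) sends it to
`B_{vI_1,…,vI_n}(t;z) · A_{vJ}(t_J) · ( ∑_{i∈I_s, j∈J} a(j,i)/(t_j−t_i) + ∑_{j∈J} a(j,s)/(t_j−z_s) )`. -/

noncomputable section
open scoped TensorProduct

abbrev FF (C : Type) := FractionRing (MvPolynomial C ℂ)

def tv {C : Type} (i : C) : FF C := algebraMap (MvPolynomial C ℂ) (FF C) (MvPolynomial.X i)

def cc {C : Type} (w : ℂ) : FF C := algebraMap (MvPolynomial C ℂ) (FF C) (MvPolynomial.C w)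

/-- `A_{vI}(t_I)`. -/
def Afun {C : Type} (a : C → C → ℂ) (l : List C) : FF C :=
  ∏ p : Fin l.length, if p.val = 0 then 1 else
    ∑ q : Fin l.length, if q < p then
      cc (a (l.get p) (l.get q)) / (tv (l.get p) - tv (l.get q)) else 0

/-- `B_{vI}(t_I; z_s)`. -/
def Bfun {C : Type} (a : C → C → ℂ) (b : C → ℂ) (z : ℂ) (l : List C) : FF C :=
  ∏ p : Fin l.length,
    (cc (b (l.get p)) / (tv (l.get p) - cc z)
      + ∑ q : Fin l.length, if q < p then
          cc (a (l.get p) (l.get q)) / (tv (l.get p) - tv (l.get q)) else 0)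

def fgen {C : Type} (i : C) : FreeAlgebra ℂ C := FreeAlgebra.ι ℂ i

/-- The monomial `f_{vI} = f_{i_N}⋯f_{i₁}`. -/
def mono {C : Type} (l : List C) : FreeAlgebra ℂ C := (l.reverse.map fgen).prod

def brktRev {C : Type} : List C → FreeAlgebra ℂ C
  | [] => 0
  | [i] => fgen i
  | i :: tl => ⁅fgen i, brktRev tl⁆

/-- `[f_{vI}]`, inside `U(𝔫)` (bracket = commutator). -/
def brkt {C : Type} (l : List C) : FreeAlgebra ℂ C := brktRev l.reverse

/-- The tensor monomial `f_{w 1} ⊗ ⋯ ⊗ f_{w n} ∈ U(𝔫)^{⊗n}`. -/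
def tmono {C : Type} (n : ℕ) (w : Fin n → List C) :
    ⨂[ℂ] (_s : Fin n), FreeAlgebra ℂ C :=
  PiTensorProduct.tprod ℂ fun s => mono (w s)

/-- `Seq^{(n)}(K)`: `n`-tuples of nodup, pairwise disjoint sequences whose entries exhaust
the finite set `K`. -/
def SeqN {C : Type} [DecidableEq C] (n : ℕ) (K : Finset C) (w : Fin n → List C) : Prop :=
  (∀ t, (w t).Nodup) ∧
    (∀ t t', t ≠ t' → Disjoint (w t).toFinset (w t').toFinset) ∧
    (Finset.univ.biUnion fun t => (w t).toFinset) = K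

/-
Both sides are linear in the bracket `[f_{vJ}]`, which lies in the span of the monomials `f_u` with
`u` a permutation of `vJ`. Appending such a `u` to the `s`-th sequence multiplies `B_{vI_s}` by a
product of the same shape as `B_u`, with the potentials `a(j,s)/(t_j - z_s)` shifted by
`∑_{i ∈ I_s} a(j,i)/(t_j - t_i)`; so everything reduces to the linear extension of that product,
evaluated on `[f_{vJ}]`. This is computed by induction along `[f_j, y] = f_j y - y f_j`: on monomials
in the letters of `J'`, left multiplication by `f_j` multiplies by the potential of `j` plus
`∑_{i ∈ J'} a(j,i)/(t_j - t_i)`, while right multiplication peels off the potential of `j` and shifts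
the others by `a(i,j)/(t_i - t_j)`. The symmetry of `a` makes the shifts cancel against the new
factor of `A`, leaving `A_{vJ}` times the sum over `J` of the shifted potentials.
-/

namespace WeightFunction

variable {C : Type}

def pairFrac (a : C → C → ℂ) (i j : C) : FF C := cc (a i j) / (tv i - tv j)

def pairSum (a : C → C → ℂ) (j : C) (l : List C) : FF C := (l.map (pairFrac a j)).sum

/-- `B_{vI}` with the potentials `a(i,s)/(t_i - z_s)` replaced by arbitrary `X i`. -/
def weightedProd (a : C → C → ℂ) (X : C → FF C) : List C → FF C
  | [] => 1
  | j :: u => X j * weightedProd a (fun i => X i + pairFrac a i j) u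

theorem pairFrac_swap {a : C → C → ℂ} (ha : ∀ i j, a i j = a j i) (i j : C) :
    pairFrac a i j = -pairFrac a j i := by
  rw [pairFrac, pairFrac, ha, ← div_neg, neg_sub]

theorem sum_map_pairFrac_left {a : C → C → ℂ} (ha : ∀ i j, a i j = a j i) (j : C)
    (l : List C) : (l.map fun k => pairFrac a k j).sum = -pairSum a j l := by
  induction l with
  | nil => simp [pairSum]
  | cons i l ih =>
    simp only [pairSum, List.map_cons, List.sum_cons, neg_add] at ih ⊢
    rw [ih, pairFrac_swap ha]

theorem pairSum_perm (a : C → C → ℂ) (j : C) {l l' : List C} (h : l.Perm l') :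
    pairSum a j l = pairSum a j l' :=
  (h.map _).sum_eq

theorem weightedProd_eq_prod (a : C → C → ℂ) (X : C → FF C) (l : List C) :
    weightedProd a X l = ∏ p : Fin l.length, (X (l.get p) + ∑ q : Fin l.length,
      if q < p then pairFrac a (l.get p) (l.get q) else 0) := by
  induction l generalizing X with
  | nil => simp [weightedProd]
  | cons j u ih =>
    rw [weightedProd, ih]
    simp only [List.length_cons]
    rw [Fin.prod_univ_succ]
    congr 1
    · simp
    · refine Finset.prod_congr rfl fun p _ => ?_
      simp only [Fin.sum_univ_succ, Fin.succ_lt_succ_iff, Fin.succ_pos, if_true,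
        List.get_eq_getElem, Fin.val_succ, Fin.val_zero, List.getElem_cons_succ,
        List.getElem_cons_zero]
      ring

theorem weightedProd_append (a : C → C → ℂ) (X : C → FF C) (l u : List C) :
    weightedProd a X (l ++ u) =
      weightedProd a X l * weightedProd a (fun i => X i + pairSum a i l) u := by
  induction l generalizing X with
  | nil => simp [weightedProd, pairSum]
  | cons j l ih =>
    simp only [List.cons_append, weightedProd, ih, pairSum, List.map_cons, List.sum_cons,
      add_assoc, mul_assoc]

theorem Bfun_eq_weightedProd (a : C → C → ℂ) (b : C → ℂ) (z : ℂ) (l : List C) :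
    Bfun a b z l = weightedProd a (fun i => cc (b i) / (tv i - cc z)) l := by
  rw [weightedProd_eq_prod]; rfl

theorem Afun_cons (a : C → C → ℂ) (j : C) (u : List C) :
    Afun a (j :: u) = weightedProd a (fun i => pairFrac a i j) u := by
  rw [weightedProd_eq_prod, Afun]
  simp only [List.length_cons]
  rw [Fin.prod_univ_succ]
  simp only [Fin.val_zero, if_true, one_mul, Fin.val_succ, Nat.add_one_ne_zero, if_false]
  refine Finset.prod_congr rfl fun p _ => ?_
  simp only [Fin.sum_univ_succ, Fin.succ_lt_succ_iff, Fin.succ_pos, if_true,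
    List.get_eq_getElem, Fin.val_succ, Fin.val_zero, List.getElem_cons_succ,
    List.getElem_cons_zero]
  rfl

theorem Afun_append_singleton (a : C → C → ℂ) {l : List C} (hl : l ≠ []) (j : C) :
    Afun a (l ++ [j]) = Afun a l * pairSum a j l := by
  obtain ⟨i, l, rfl⟩ := List.exists_cons_of_ne_nil hl
  rw [List.cons_append, Afun_cons, Afun_cons, weightedProd_append]
  simp [weightedProd, pairSum]

theorem mono_append (u v : List C) : mono (u ++ v) = mono v * mono u := by
  simp [mono, List.reverse_append]

theorem mono_singleton (i : C) : mono [i] = fgen i := by simp [mono]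

theorem fgen_mul_mono (j : C) (u : List C) : fgen j * mono u = mono (u ++ [j]) := by
  rw [mono_append, mono_singleton]

theorem mono_mul_fgen (j : C) (u : List C) : mono u * fgen j = mono (j :: u) := by
  rw [← List.singleton_append, mono_append, mono_singleton]

theorem basisFreeMonoid_ofList_reverse (l : List C) :
    FreeAlgebra.basisFreeMonoid ℂ C (FreeMonoid.ofList l.reverse) = mono l := by
  simp [FreeAlgebra.basisFreeMonoid, FreeAlgebra.equivMonoidAlgebraFreeMonoid, mono]
  rfl

def weightedEval (a : C → C → ℂ) (X : C → FF C) : FreeAlgebra ℂ C →ₗ[ℂ] FF C :=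
  (FreeAlgebra.basisFreeMonoid ℂ C).constr ℂ fun w => weightedProd a X w.toList.reverse

theorem weightedEval_mono (a : C → C → ℂ) (X : C → FF C) (u : List C) :
    weightedEval a X (mono u) = weightedProd a X u := by
  rw [← basisFreeMonoid_ofList_reverse, weightedEval, Module.Basis.constr_basis,
    FreeMonoid.toList_ofList, List.reverse_reverse]

theorem weightedEval_mul_fgen (a : C → C → ℂ) (X : C → FF C) (j : C) (y : FreeAlgebra ℂ C) :
    weightedEval a X (y * fgen j) = X j * weightedEval a (fun i => X i + pairFrac a i j) y := by
  suffices weightedEval a X ∘ₗ LinearMap.mulRight ℂ (fgen j) =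
      LinearMap.mulLeft ℂ (X j) ∘ₗ weightedEval a (fun i => X i + pairFrac a i j) from
    LinearMap.congr_fun this y
  refine (FreeAlgebra.basisFreeMonoid ℂ C).ext fun w => ?_
  rw [← w.ofList_toList, ← w.toList.reverse_reverse, basisFreeMonoid_ofList_reverse]
  simp only [LinearMap.comp_apply, LinearMap.mulRight_apply, LinearMap.mulLeft_apply,
    mono_mul_fgen, weightedEval_mono, weightedProd]

def permMonos (m : List C) : Set (FreeAlgebra ℂ C) := {x | ∃ u, u.Perm m ∧ x = mono u}

theorem permMonos_reverse (m : List C) : permMonos m.reverse = permMonos m := by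
  ext x
  simp [permMonos]

theorem fgen_mul_mem_span {m : List C} (j : C) {y : FreeAlgebra ℂ C}
    (hy : y ∈ Submodule.span ℂ (permMonos m)) :
    fgen j * y ∈ Submodule.span ℂ (permMonos (j :: m)) := by
  refine Submodule.span_mono ?_ (Submodule.apply_mem_span_image_of_mem_span
    (LinearMap.mulLeft ℂ (fgen j)) hy)
  rintro _ ⟨_, ⟨u, hu, rfl⟩, rfl⟩
  exact ⟨u ++ [j], (hu.append_right [j]).trans (List.perm_append_singleton j m),
    fgen_mul_mono j u⟩

theorem mul_fgen_mem_span {m : List C} (j : C) {y : FreeAlgebra ℂ C}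
    (hy : y ∈ Submodule.span ℂ (permMonos m)) :
    y * fgen j ∈ Submodule.span ℂ (permMonos (j :: m)) := by
  refine Submodule.span_mono ?_ (Submodule.apply_mem_span_image_of_mem_span
    (LinearMap.mulRight ℂ (fgen j)) hy)
  rintro _ ⟨_, ⟨u, hu, rfl⟩, rfl⟩
  exact ⟨j :: u, hu.cons j, mono_mul_fgen j u⟩

theorem weightedEval_fgen_mul (a : C → C → ℂ) (X : C → FF C) {m : List C} (j : C)
    {y : FreeAlgebra ℂ C} (hy : y ∈ Submodule.span ℂ (permMonos m)) :
    weightedEval a X (fgen j * y) = (X j + pairSum a j m) * weightedEval a X y := by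
  refine LinearMap.eqOn_span (f := weightedEval a X ∘ₗ LinearMap.mulLeft ℂ (fgen j))
    (g := LinearMap.mulLeft ℂ (X j + pairSum a j m) ∘ₗ weightedEval a X) ?_ hy
  rintro _ ⟨u, hu, rfl⟩
  simp only [LinearMap.comp_apply, LinearMap.mulLeft_apply, fgen_mul_mono, weightedEval_mono,
    weightedProd_append, weightedProd, pairSum_perm a j hu]
  ring

theorem brktRev_cons_cons (j i : C) (l : List C) :
    brktRev (j :: i :: l) = fgen j * brktRev (i :: l) - brktRev (i :: l) * fgen j :=
  Ring.lie_def _ _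

theorem brktRev_mem_span (m : List C) : brktRev m ∈ Submodule.span ℂ (permMonos m) := by
  induction m with
  | nil => exact Submodule.zero_mem _
  | cons j m ih =>
    rcases m with _ | ⟨i, l⟩
    · exact Submodule.subset_span ⟨[j], List.Perm.refl _, (mono_singleton j).symm⟩
    · rw [brktRev_cons_cons]
      exact Submodule.sub_mem _ (fgen_mul_mem_span j ih) (mul_fgen_mem_span j ih)

theorem weightedEval_brktRev {a : C → C → ℂ} (ha : ∀ i j, a i j = a j i) (m : List C)
    (X : C → FF C) : weightedEval a X (brktRev m) = Afun a m.reverse * (m.map X).sum := by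
  induction m generalizing X with
  | nil => simp [brktRev]
  | cons j m ih =>
    rcases m with _ | ⟨i, l⟩
    · rw [show brktRev [j] = mono [j] from (mono_singleton j).symm, weightedEval_mono]
      simp [weightedProd, Afun_cons]
    · have hsym := sum_map_pairFrac_left ha j (i :: l)
      rw [List.reverse_cons, Afun_append_singleton a (by simp) j, brktRev_cons_cons, map_sub,
        weightedEval_fgen_mul a X j (brktRev_mem_span _), weightedEval_mul_fgen, ih, ih,
        List.sum_map_add, hsym, pairSum_perm a j (List.reverse_perm _)]
      simp only [List.map_cons, List.sum_cons]
      ring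

theorem brkt_mem_span (l : List C) : brkt l ∈ Submodule.span ℂ (permMonos l) := by
  rw [brkt, ← permMonos_reverse]
  exact brktRev_mem_span _

theorem weightedEval_brkt {a : C → C → ℂ} (ha : ∀ i j, a i j = a j i) (l : List C)
    (X : C → FF C) : weightedEval a X (brkt l) = Afun a l * (l.map X).sum := by
  rw [brkt, weightedEval_brktRev ha, List.reverse_reverse, List.map_reverse, List.sum_reverse]

variable {n : ℕ}

/-- `y ↦ f_{v 1} ⊗ ⋯ ⊗ y·f_{v s} ⊗ ⋯ ⊗ f_{v n}`. -/
def slotMul (v : Fin n → List C) (s : Fin n) :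
    FreeAlgebra ℂ C →ₗ[ℂ] ⨂[ℂ] (_s : Fin n), FreeAlgebra ℂ C :=
  (PiTensorProduct.tprod ℂ).toLinearMap (fun t => mono (v t)) s ∘ₗ
    LinearMap.mulRight ℂ (mono (v s))

theorem slotMul_apply (v : Fin n → List C) (s : Fin n) (y : FreeAlgebra ℂ C) :
    slotMul v s y =
      PiTensorProduct.tprod ℂ fun t => if t = s then y * mono (v t) else mono (v t) := by
  rw [slotMul, LinearMap.comp_apply, LinearMap.mulRight_apply, MultilinearMap.toLinearMap_apply]
  congr 1
  funext t
  by_cases h : t = s <;> simp [h]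

theorem slotMul_mono (v : Fin n → List C) (s : Fin n) (u : List C) :
    slotMul v s (mono u) = tmono n (Function.update v s (v s ++ u)) := by
  rw [slotMul_apply, tmono]
  congr 1
  funext t
  by_cases h : t = s <;> simp [h, mono_append]

theorem seqN_update_append [DecidableEq C] {v : Fin n → List C} (hnd : ∀ t, (v t).Nodup)
    (hdisj : ∀ t t', t ≠ t' → Disjoint (v t).toFinset (v t').toFinset) (s : Fin n)
    {u : List C} (hu : u.Nodup) (hud : ∀ t, Disjoint u.toFinset (v t).toFinset) :
    SeqN n ((Finset.univ.biUnion fun t => (v t).toFinset) ∪ u.toFinset)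
      (Function.update v s (v s ++ u)) := by
  have hfin : ∀ t, (Function.update v s (v s ++ u) t).toFinset =
      if t = s then (v t).toFinset ∪ u.toFinset else (v t).toFinset := by
    intro t
    by_cases h : t = s <;> simp [h]
  refine ⟨fun t => ?_, fun t t' htt' => ?_, ?_⟩
  · by_cases h : t = s
    · subst h
      rw [Function.update_self]
      exact (hnd t).append hu (List.disjoint_toFinset_iff_disjoint.mp (hud t).symm)
    · rw [Function.update_of_ne h]; exact hnd t
  · rw [hfin, hfin]
    split_ifs with h h'
    · exact absurd (h.trans h'.symm) htt'
    · exact Finset.disjoint_union_left.mpr ⟨hdisj t t' htt', hud t'⟩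
    · exact Finset.disjoint_union_right.mpr ⟨hdisj t t' htt', (hud t).symm⟩
    · exact hdisj t t' htt'
  · ext x
    simp only [hfin, Finset.mem_biUnion, Finset.mem_univ, true_and, Finset.mem_union]
    grind

theorem slotMul_mem_span [DecidableEq C] {v : Fin n → List C} (hnd : ∀ t, (v t).Nodup)
    (hdisj : ∀ t t', t ≠ t' → Disjoint (v t).toFinset (v t').toFinset) (s : Fin n)
    {m : List C} (hm : m.Nodup) (hmd : ∀ t, Disjoint m.toFinset (v t).toFinset)
    {y : FreeAlgebra ℂ C} (hy : y ∈ Submodule.span ℂ (permMonos m)) :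
    slotMul v s y ∈ Submodule.span ℂ
      {x | ∃ w, SeqN n ((Finset.univ.biUnion fun t => (v t).toFinset) ∪ m.toFinset) w ∧
        x = tmono n w} := by
  refine Submodule.span_mono ?_ (Submodule.apply_mem_span_image_of_mem_span (slotMul v s) hy)
  rintro _ ⟨_, ⟨u, hu, rfl⟩, rfl⟩
  rw [← List.toFinset_eq_of_perm _ _ hu] at hmd ⊢
  exact ⟨_, seqN_update_append hnd hdisj s (hu.nodup_iff.mpr hm) hmd, slotMul_mono v s u⟩

theorem Bfun_append (a : C → C → ℂ) (b : C → ℂ) (z : ℂ) (l u : List C) :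
    Bfun a b z (l ++ u) =
      Bfun a b z l * weightedProd a (fun i => cc (b i) / (tv i - cc z) + pairSum a i l) u := by
  rw [Bfun_eq_weightedProd, Bfun_eq_weightedProd, weightedProd_append]

theorem prod_Bfun_update (a : C → C → ℂ) (b : C → Fin n → ℂ) (z : Fin n → ℂ)
    (v : Fin n → List C) (s : Fin n) (u : List C) :
    ∏ t, Bfun a (fun i => b i t) (z t) (Function.update v s (v s ++ u) t) =
      (∏ t, Bfun a (fun i => b i t) (z t) (v t)) *
        weightedProd a (fun i => cc (b i s) / (tv i - cc (z s)) + pairSum a i (v s)) u := by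
  rw [Finset.prod_congr rfl fun t _ => Function.apply_update
      (fun t => Bfun a (fun i => b i t) (z t)) v s (v s ++ u) t,
    Finset.prod_update_of_mem (Finset.mem_univ s), Bfun_append,
    Finset.prod_eq_mul_prod_sdiff_singleton_of_mem (Finset.mem_univ s)]
  ring

theorem apply_slotMul_of_mem_span [DecidableEq C] (a : C → C → ℂ) (b : C → Fin n → ℂ)
    (z : Fin n → ℂ) {v : Fin n → List C} (hnd : ∀ t, (v t).Nodup)
    (hdisj : ∀ t t', t ≠ t' → Disjoint (v t).toFinset (v t').toFinset) (s : Fin n)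
    {m : List C} (hm : m.Nodup) (hmd : ∀ t, Disjoint m.toFinset (v t).toFinset)
    (φ : (⨂[ℂ] (_s : Fin n), FreeAlgebra ℂ C) →ₗ[ℂ] FF C)
    (hφ : ∀ w, SeqN n ((Finset.univ.biUnion fun t => (v t).toFinset) ∪ m.toFinset) w →
      φ (tmono n w) = ∏ t, Bfun a (fun i => b i t) (z t) (w t))
    {y : FreeAlgebra ℂ C} (hy : y ∈ Submodule.span ℂ (permMonos m)) :
    φ (slotMul v s y) = (∏ t, Bfun a (fun i => b i t) (z t) (v t)) *
      weightedEval a (fun i => cc (b i s) / (tv i - cc (z s)) + pairSum a i (v s)) y := by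
  refine LinearMap.eqOn_span (f := φ ∘ₗ slotMul v s) (g := LinearMap.mulLeft ℂ _ ∘ₗ
    weightedEval a (fun i => cc (b i s) / (tv i - cc (z s)) + pairSum a i (v s))) ?_ hy
  rintro _ ⟨u, hu, rfl⟩
  rw [← List.toFinset_eq_of_perm _ _ hu] at hmd hφ
  simp only [LinearMap.comp_apply, LinearMap.mulLeft_apply, slotMul_mono, weightedEval_mono,
    hφ _ (seqN_update_append hnd hdisj s (hu.nodup_iff.mpr hm) hmd), prod_Bfun_update]

end WeightFunction

open WeightFunction

theorem statement5 {C : Type} [DecidableEq C]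
    (n : ℕ) (z : Fin n → ℂ)
    (a : C → C → ℂ) (ha : ∀ i j, a i j = a j i) (b : C → Fin n → ℂ)
    (vI : Fin n → List C) (hnd : ∀ t, (vI t).Nodup)
    (hdisj : ∀ t t', t ≠ t' → Disjoint (vI t).toFinset (vI t').toFinset)
    (vJ : List C) (hJnd : vJ.Nodup)
    (hJdisj : ∀ t, Disjoint vJ.toFinset (vI t).toFinset)
    (s : Fin n) :
    -- the set `I ∪ J`
    (PiTensorProduct.tprod ℂ fun t =>
        if t = s then brkt vJ * mono (vI t) else mono (vI t)) ∈
      Submodule.span ℂ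
        {x | ∃ w : Fin n → List C,
          SeqN n ((Finset.univ.biUnion fun t => (vI t).toFinset) ∪ vJ.toFinset) w ∧
            x = tmono n w} ∧
    ∀ φ : (⨂[ℂ] (_s : Fin n), FreeAlgebra ℂ C) →ₗ[ℂ] FF C,
      (∀ w : Fin n → List C,
          SeqN n ((Finset.univ.biUnion fun t => (vI t).toFinset) ∪ vJ.toFinset) w →
          φ (tmono n w) = ∏ t, Bfun a (fun i => b i t) (z t) (w t)) →
      φ (PiTensorProduct.tprod ℂ fun t =>
          if t = s then brkt vJ * mono (vI t) else mono (vI t))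
        = (∏ t, Bfun a (fun i => b i t) (z t) (vI t)) * Afun a vJ *
            ((∑ j ∈ vJ.toFinset, ∑ i ∈ (vI s).toFinset, cc (a j i) / (tv j - tv i))
              + ∑ j ∈ vJ.toFinset, cc (b j s) / (tv j - cc (z s))) := by
  rw [← slotMul_apply]
  refine ⟨slotMul_mem_span hnd hdisj s hJnd hJdisj (brkt_mem_span vJ), fun φ hφ => ?_⟩
  rw [apply_slotMul_of_mem_span a b z hnd hdisj s hJnd hJdisj φ hφ (brkt_mem_span vJ),
    weightedEval_brkt ha, ← List.sum_toFinset _ hJnd, ← Finset.sum_add_distrib, mul_assoc]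
  congr 2
  refine Finset.sum_congr rfl fun j _ => ?_
  rw [add_comm, pairSum, ← List.sum_toFinset _ (hnd s)]
  rfl
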